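/- Let (W_∗, F^∗) and (W'_∗, F'^∗) be ℝ-mixed Hodge structures on finite-dimensional real vector spaces V and V', and let f : V → V' be a real linear map with f(W_i) ⊆ W'_i for all i and f_ℂ(F^p) ⊆ F'^p for all p, where f_ℂ = f ⊗ id_ℂ. Let Q = V'/f(V), with quotient map π, so Q_ℂ identifies with V'_ℂ/f_ℂ(V_ℂ). Then the filtrations W_i(Q) := π(W'_i) and F^p(Q_ℂ) := π_ℂ(F'^p) form an ℝ-mixed Hodge structure on Q. -/

import Mathlib

/-!
The filtrations of `Q` are images of those of `V'`, so the spanning condition on `Gr^W_n Q` is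
inherited directly. The intersection condition needs `f_ℂ` to be strict: for `K = f_ℂ(V_ℂ)`,
`(F'^p + K) ∩ (W'_n ⊗ ℂ + K) = F'^p ∩ (W'_n ⊗ ℂ) + K` (likewise for `σ F'^p`) and
`K ∩ (W'_n ⊗ ℂ) = f_ℂ(W_n ⊗ ℂ)`. Both come from Deligne's splitting `V_ℂ = ⊕ I^{p,q}`: it is
preserved by `f_ℂ`, `W_n ⊗ ℂ` and `F^p` are the sums of the `I^{p,q}` with `p + q ≤ n`, resp.
with `p` at least the given index, and for an independent family intersections of such sums are
computed summand by summand. Granted strictness, the intersection condition for `Q` reduces to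
the one for `V'`, after writing an element of `K ∩ (W'_n ⊗ ℂ)` as the image of a Hodge
decomposition in `Gr^W_n V`.
-/

open TensorProduct

noncomputable section

namespace MHS

instance : RingHomSurjective (starRingEnd ℂ) :=
  ⟨fun x => ⟨star x, star_star x⟩⟩

variable (V : Type*) [AddCommGroup V] [Module ℝ V]

/-- The inclusion `v ↦ 1 ⊗ v` of `V` into its complexification `ℂ ⊗[ℝ] V`. -/
def incl : V →ₗ[ℝ] ℂ ⊗[ℝ] V := TensorProduct.mk ℝ ℂ V 1

/-- Complex conjugation on the complexification `ℂ ⊗[ℝ] V`, as a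
conjugate-linear (i.e. `starRingEnd ℂ`-semilinear) map. -/
def conjC : (ℂ ⊗[ℝ] V) →ₛₗ[starRingEnd ℂ] (ℂ ⊗[ℝ] V) where
  toFun := LinearMap.rTensor V (Complex.conjAe.toLinearMap : ℂ →ₗ[ℝ] ℂ)
  map_add' := fun x y => map_add _ x y
  map_smul' := by
    intro c x
    induction x using TensorProduct.induction_on with
    | zero => simp
    | tmul a v =>
        simp only [TensorProduct.smul_tmul', LinearMap.rTensor_tmul, smul_eq_mul,
          AlgEquiv.toLinearMap_apply, map_mul, starRingEnd_apply]
        rfl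
    | add x y hx hy =>
        simp only [smul_add, map_add]
        exact congrArg₂ (· + ·) hx hy

/-- The complexification `W ⊗ ℂ` of a real subspace `W ⊆ V`, as a complex
subspace of `ℂ ⊗[ℝ] V`. -/
def cx (W : Submodule ℝ V) : Submodule ℂ (ℂ ⊗[ℝ] V) :=
  Submodule.span ℂ (incl V '' (W : Set V))

variable {V}

/-- `(W, F)` is an `ℝ`-mixed Hodge structure on `V`:  `W` is an increasing
exhaustive filtration of `V` by real subspaces, `F` a decreasing exhaustive
filtration of `ℂ ⊗[ℝ] V` by complex subspaces, and for every `n, p` the induced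
filtration on `Gr^W_n = (W n ⊗ ℂ)/(W (n-1) ⊗ ℂ)` satisfies the weight `n`
Hodge decomposition conditions (expressed here at the level of preimages in
`W n ⊗ ℂ` of the relevant subspaces of the quotient). -/
structure IsRMHS (W : ℤ → Submodule ℝ V) (F : ℤ → Submodule ℂ (ℂ ⊗[ℝ] V)) : Prop where
  monoW : Monotone W
  antiF : Antitone F
  w_bot : ∃ a : ℤ, ∀ i ≤ a, W i = ⊥
  w_top : ∃ b : ℤ, ∀ i, b ≤ i → W i = ⊤
  f_top : ∃ a : ℤ, ∀ p ≤ a, F p = ⊤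
  f_bot : ∃ b : ℤ, ∀ p, b ≤ p → F p = ⊥
  gr_inf : ∀ n p : ℤ,
      ((F p ⊓ cx V (W n)) ⊔ cx V (W (n-1))) ⊓
        ((((F (n+1-p)).map (conjC V)) ⊓ cx V (W n)) ⊔ cx V (W (n-1)))
      = cx V (W (n-1))
  gr_sup : ∀ n p : ℤ,
      (F p ⊓ cx V (W n)) ⊔ ((((F (n+1-p)).map (conjC V)) ⊓ cx V (W n)) ⊔ cx V (W (n-1)))
      = cx V (W n)

/-- The subspace `R^{p,q} = (W_{p+q} ⊗ ℂ) ∩ F^p`. -/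
def Rpq (W : ℤ → Submodule ℝ V) (F : ℤ → Submodule ℂ (ℂ ⊗[ℝ] V)) (p q : ℤ) :
    Submodule ℂ (ℂ ⊗[ℝ] V) :=
  cx V (W (p + q)) ⊓ F p

/-- The subspace
`L^{p,q} = (W_{p+q} ⊗ ℂ) ∩ σ(F^q) + Σ_{i ≥ 2} (W_{p+q-i} ⊗ ℂ) ∩ σ(F^{q-i+1})`. -/
def Lpq (W : ℤ → Submodule ℝ V) (F : ℤ → Submodule ℂ (ℂ ⊗[ℝ] V)) (p q : ℤ) :
    Submodule ℂ (ℂ ⊗[ℝ] V) :=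
  (cx V (W (p + q)) ⊓ (F q).map (conjC V)) ⊔
    ⨆ i : ℤ, ⨆ _ : 2 ≤ i, (cx V (W (p + q - i)) ⊓ (F (q - i + 1)).map (conjC V))

/-- The Deligne subspace `I^{p,q} = R^{p,q} ∩ L^{p,q}`. -/
def Ipq (W : ℤ → Submodule ℝ V) (F : ℤ → Submodule ℂ (ℂ ⊗[ℝ] V)) (p q : ℤ) :
    Submodule ℂ (ℂ ⊗[ℝ] V) :=
  Rpq W F p q ⊓ Lpq W F p q

end MHS

theorem Int.forall_of_forall_le_of_pred {P : ℤ → Prop} (a : ℤ) (hle : ∀ m ≤ a, P m)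
    (hpred : ∀ m, a < m → P (m - 1) → P m) (m : ℤ) : P m := by
  induction m using Int.inductionOn' (b := a) with
  | zero => exact hle a le_rfl
  | succ k hk ih => exact hpred (k + 1) (by omega) (by simpa using ih)
  | pred k hk _ => exact hle _ (by omega)

theorem Int.forall_of_forall_ge_of_succ {P : ℤ → Prop} (b : ℤ) (hge : ∀ m, b ≤ m → P m)
    (hsucc : ∀ m, m < b → P (m + 1) → P m) (m : ℤ) : P m := by
  induction m using Int.inductionOn' (b := b) with
  | zero => exact hge b le_rfl
  | succ k hk _ => exact hge _ (by omega)
  | pred k hk ih => exact hsucc (k - 1) (by omega) (by simpa using ih)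

theorem iSupIndep_of_disjoint_iSup_lt {ι κ α : Type*} [LinearOrder κ] [CompleteLattice α]
    [IsModularLattice α] [IsCompactlyGenerated α] {f : ι → α} {key : ι → κ}
    (hkey : Function.Injective key) (h : ∀ i, Disjoint (f i) (⨆ (j) (_ : key j < key i), f j)) :
    iSupIndep f := by
  classical
  refine iSupIndep_iff_supIndep.mpr fun s => ?_
  induction s using Finset.induction_on_max_value key with
  | empty => exact Finset.supIndep_empty f
  | insert a s ha hmax ih =>
    refine ih.insert ((h a).mono_right (Finset.sup_le fun j hj => le_iSup₂_of_le j ?_ le_rfl))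
    exact (hmax j hj).lt_of_ne (hkey.ne (ne_of_mem_of_not_mem hj ha))

theorem iSupIndep.iSup_inf_iSup_le {ι R M : Type*} [Ring R] [AddCommGroup M] [Module R M]
    {J L L' : ι → Submodule R M} (hJ : iSupIndep J) (hL : ∀ i, L i ≤ J i)
    (hL' : ∀ i, L' i ≤ J i) : (⨆ i, L i) ⊓ (⨆ i, L' i) ≤ ⨆ i, L i ⊓ L' i := by
  classical
  rintro x ⟨hx, hx'⟩
  obtain ⟨v, hv, rfl⟩ := (Submodule.mem_iSup_iff_exists_finsupp L x).mp hx
  obtain ⟨w, hw, hvw⟩ := (Submodule.mem_iSup_iff_exists_finsupp L' _).mp hx'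
  have hsum : ∑ i ∈ v.support ∪ w.support, v i = ∑ i ∈ v.support ∪ w.support, w i := by
    rw [← Finsupp.sum_of_support_subset v Finset.subset_union_left (fun _ x => x) (by simp),
      ← Finsupp.sum_of_support_subset w Finset.subset_union_right (fun _ x => x) (by simp), hvw]
  have hvw : v = w := by
    ext i
    by_cases hi : i ∈ v.support ∪ w.support
    · exact (iSupIndep_iff_finsetSum_eq_imp_eq J).mp hJ _ v w
        (fun j _ => ⟨hL j (hv j), hL' j (hw j)⟩) hsum i hi
    · simp only [Finset.mem_union, Finsupp.mem_support_iff, not_or, not_not] at hi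
      rw [hi.1, hi.2]
  subst hvw
  exact (Submodule.mem_iSup_iff_exists_finsupp _ _).mpr ⟨v, fun i => ⟨hv i, hw i⟩, rfl⟩

theorem Submodule.map_inf_map_le_map_of_surjective {R M N : Type*} [Ring R] [AddCommGroup M]
    [Module R M] [AddCommGroup N] [Module R N] {π : M →ₗ[R] N} (hπ : Function.Surjective π)
    {X Y Z : Submodule R M}
    (h : (X ⊔ LinearMap.ker π) ⊓ (Y ⊔ LinearMap.ker π) ≤ Z ⊔ LinearMap.ker π) :
    X.map π ⊓ Y.map π ≤ Z.map π := by
  rw [← Submodule.map_comap_eq_of_surjective hπ (X.map π ⊓ Y.map π), Submodule.comap_inf,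
    Submodule.comap_map_eq, Submodule.comap_map_eq,
    ← Submodule.map_comap_eq_of_surjective hπ (Z.map π), Submodule.comap_map_eq]
  exact Submodule.map_mono h

theorem LinearMap.ker_baseChange_mkQ_range {R A M N : Type*} [CommRing R] [Ring A] [Algebra R A]
    [AddCommGroup M] [Module R M] [AddCommGroup N] [Module R N] (f : M →ₗ[R] N) :
    LinearMap.ker (((LinearMap.range f).mkQ).baseChange A) = LinearMap.range (f.baseChange A) :=
  LinearMap.exact_iff.mp <| lTensor_exact A (LinearMap.exact_iff.mpr (Submodule.ker_mkQ _))
    (Submodule.mkQ_surjective _)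

namespace MHS

section Complexification

variable {V V₂ : Type*} [AddCommGroup V] [Module ℝ V] [AddCommGroup V₂] [Module ℝ V₂]

@[simp] lemma conjC_tmul (c : ℂ) (v : V) :
    conjC V (c ⊗ₜ[ℝ] v) = (starRingEnd ℂ c) ⊗ₜ[ℝ] v := rfl

lemma conjC_involutive : Function.Involutive (conjC V) := by
  intro x
  induction x using TensorProduct.induction_on with
  | zero => simp
  | tmul c v => simp
  | add x y hx hy => rw [map_add, map_add, hx, hy]

lemma cx_mono {S T : Submodule ℝ V} (h : S ≤ T) : cx V S ≤ cx V T :=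
  Submodule.span_mono (Set.image_mono h)

@[simp] lemma cx_bot : cx V (⊥ : Submodule ℝ V) = ⊥ := by
  simp [cx, incl]

lemma cx_top : cx V (⊤ : Submodule ℝ V) = ⊤ := by
  refine eq_top_iff.mpr fun x _ => ?_
  induction x using TensorProduct.induction_on with
  | zero => exact zero_mem _
  | tmul c v =>
    rw [show c ⊗ₜ[ℝ] v = c • incl V v by simp [incl, TensorProduct.smul_tmul']]
    exact Submodule.smul_mem _ c (Submodule.subset_span ⟨v, trivial, rfl⟩)
  | add x y hx hy => exact add_mem (hx trivial) (hy trivial)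

lemma map_conjC_cx (S : Submodule ℝ V) : (cx V S).map (conjC V) = cx V S := by
  rw [cx, Submodule.map_span, ← Set.image_comp]
  congr 2
  ext v
  simp [incl]

lemma baseChange_conjC (g : V →ₗ[ℝ] V₂) (x : ℂ ⊗[ℝ] V) :
    g.baseChange ℂ (conjC V x) = conjC V₂ (g.baseChange ℂ x) := by
  induction x using TensorProduct.induction_on with
  | zero => simp
  | tmul c v => simp
  | add x y hx hy => rw [map_add, map_add, map_add, map_add, hx, hy]

lemma map_baseChange_map_conjC (g : V →ₗ[ℝ] V₂) (S : Submodule ℂ (ℂ ⊗[ℝ] V)) :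
    (S.map (conjC V)).map (g.baseChange ℂ) = (S.map (g.baseChange ℂ)).map (conjC V₂) := by
  rw [← Submodule.map_comp, ← Submodule.map_comp]
  congr 1
  exact LinearMap.ext (baseChange_conjC g)

lemma cx_map (g : V →ₗ[ℝ] V₂) (S : Submodule ℝ V) :
    cx V₂ (S.map g) = (cx V S).map (g.baseChange ℂ) := by
  rw [cx, cx, Submodule.map_span, Submodule.map_coe, ← Set.image_comp, ← Set.image_comp]
  rfl

lemma map_conjC_range_baseChange (g : V →ₗ[ℝ] V₂) :
    (LinearMap.range (g.baseChange ℂ)).map (conjC V₂) = LinearMap.range (g.baseChange ℂ) := by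
  rw [LinearMap.range_eq_map, ← cx_top, ← map_baseChange_map_conjC, map_conjC_cx]

end Complexification

section Deligne

variable {V : Type*} [AddCommGroup V] [Module ℝ V]
  {W : ℤ → Submodule ℝ V} {F : ℤ → Submodule ℂ (ℂ ⊗[ℝ] V)}

lemma Ipq_le_cx {p q : ℤ} : Ipq W F p q ≤ cx V (W (p + q)) := inf_le_left.trans inf_le_left

lemma Ipq_le_F {p q : ℤ} : Ipq W F p q ≤ F p := inf_le_left.trans inf_le_right

lemma IsRMHS.cx_le_cx (h : IsRMHS W F) {m n : ℤ} (hmn : m ≤ n) : cx V (W m) ≤ cx V (W n) :=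
  cx_mono (h.monoW hmn)

lemma IsRMHS.map_conjC_le_map_conjC (h : IsRMHS W F) {p q : ℤ} (hpq : p ≤ q) :
    (F q).map (conjC V) ≤ (F p).map (conjC V) :=
  Submodule.map_mono (h.antiF hpq)

lemma IsRMHS.inf_le_cx_sub_one (h : IsRMHS W F) (n p : ℤ) :
    F p ⊓ cx V (W n) ⊓ ((F (n + 1 - p)).map (conjC V) ⊔ cx V (W (n - 1))) ≤
      cx V (W (n - 1)) := by
  have hW : cx V (W (n - 1)) ≤ cx V (W n) := h.cx_le_cx (by omega)
  refine le_trans (le_inf (inf_le_left.trans le_sup_left) ?_) (h.gr_inf n p).le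
  calc F p ⊓ cx V (W n) ⊓ ((F (n + 1 - p)).map (conjC V) ⊔ cx V (W (n - 1)))
      ≤ (cx V (W (n - 1)) ⊔ (F (n + 1 - p)).map (conjC V)) ⊓ cx V (W n) :=
        le_inf (inf_le_right.trans (sup_comm _ _).le) (inf_le_left.trans inf_le_right)
    _ = (F (n + 1 - p)).map (conjC V) ⊓ cx V (W n) ⊔ cx V (W (n - 1)) := by
        rw [sup_inf_assoc_of_le _ hW, sup_comm]

lemma IsRMHS.Lpq_le (h : IsRMHS W F) (p q : ℤ) {j : ℤ} (hj : 0 ≤ j) :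
    Lpq W F p q ≤ (F (q - j)).map (conjC V) ⊔ cx V (W (p + q - j - 2)) := by
  refine sup_le (le_sup_of_le_left (inf_le_right.trans (h.map_conjC_le_map_conjC (by omega))))
    (iSup₂_le fun i hi => ?_)
  rcases le_or_gt i (j + 1) with hij | hij
  · exact le_sup_of_le_left (inf_le_right.trans (h.map_conjC_le_map_conjC (by omega)))
  · exact le_sup_of_le_right (inf_le_left.trans (h.cx_le_cx (by omega)))

lemma IsRMHS.cx_inf_map_conjC_le_Lpq (h : IsRMHS W F) (p q : ℤ) {m : ℤ} (hm : m ≤ p + q - 1) :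
    cx V (W m) ⊓ (F (m + 1 - p)).map (conjC V) ≤ Lpq W F p q := by
  rcases hm.eq_or_lt with rfl | hm
  · refine le_sup_of_le_left (inf_le_inf (h.cx_le_cx (by omega)) ?_)
    rw [show p + q - 1 + 1 - p = q by ring]
  · refine le_sup_of_le_right (le_iSup₂_of_le (p + q - m) (by omega) ?_)
    rw [show p + q - (p + q - m) = m by ring, show q - (p + q - m) + 1 = m + 1 - p by ring]

lemma IsRMHS.Ipq_inf_cx_eq_bot (h : IsRMHS W F) (p q : ℤ) :
    Ipq W F p q ⊓ cx V (W (p + q - 1)) = ⊥ := by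
  obtain ⟨a, ha⟩ := h.w_bot
  suffices ∀ m, m ≤ p + q - 1 → Ipq W F p q ⊓ cx V (W m) = ⊥ from this _ le_rfl
  intro m hm
  induction m using Int.forall_of_forall_le_of_pred a with
  | hle m hma => rw [ha m hma, cx_bot, inf_bot_eq]
  | hpred m _ ih =>
    -- `I^{p,q} ∩ W_m` lies in `W_{m-1}`, by the Hodge condition on `Gr^W_m`
    have hL := h.Lpq_le p q (j := p + q - 1 - m) (by omega)
    rw [show q - (p + q - 1 - m) = m + 1 - p by ring,
      show p + q - (p + q - 1 - m) - 2 = m - 1 by ring] at hL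
    refine eq_bot_iff.mpr (le_trans (le_inf inf_le_left ?_) (ih (by omega)).le)
    exact (le_inf (le_inf (inf_le_left.trans Ipq_le_F) inf_le_right)
      (inf_le_left.trans (inf_le_right.trans hL))).trans (h.inf_le_cx_sub_one m p)

lemma IsRMHS.iSupIndep_Ipq (h : IsRMHS W F) : iSupIndep fun i : ℤ × ℤ => Ipq W F i.1 i.2 := by
  -- order by weight, then by `p`: the pieces below `I^{p,q}` lie in `σ F^{q+1} + W_{p+q-1}`
  refine iSupIndep_of_disjoint_iSup_lt (key := fun i : ℤ × ℤ => toLex (i.1 + i.2, i.1))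
    (fun i j hij => ?_) fun ⟨p, q⟩ => ?_
  · simp only [toLex_inj, Prod.mk.injEq] at hij
    exact Prod.ext hij.2 (by omega)
  rw [disjoint_iff_inf_le, ← h.Ipq_inf_cx_eq_bot p q]
  refine le_inf inf_le_left ((le_inf (le_inf (inf_le_left.trans Ipq_le_F)
    (inf_le_left.trans Ipq_le_cx)) (inf_le_right.trans (iSup₂_le fun j hj => ?_))).trans
    (h.inf_le_cx_sub_one (p + q) p))
  rcases Prod.Lex.lt_iff.mp hj with hlt | ⟨heq, hlt⟩
  · exact le_sup_of_le_right (Ipq_le_cx.trans (h.cx_le_cx (by simp only [ofLex_toLex] at hlt; omega)))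
  · simp only [ofLex_toLex] at heq hlt
    refine (inf_le_right.trans (h.Lpq_le j.1 j.2 le_rfl)).trans
      (sup_le_sup (h.map_conjC_le_map_conjC (by omega)) (h.cx_le_cx (by omega)))

lemma IsRMHS.F_inf_cx_inf_Lpq_sup_le (h : IsRMHS W F) (p q : ℤ) {m : ℤ} (hm : m ≤ p + q - 1) :
    F p ⊓ cx V (W (p + q)) ⊓ (Lpq W F p q ⊔ cx V (W m)) ≤
      Ipq W F p q ⊔ (F p ⊓ cx V (W (p + q - 1))) := by
  obtain ⟨a, ha⟩ := h.w_bot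
  set G := F p ⊓ cx V (W (p + q - 1))
  have hG : G ≤ F p ⊓ cx V (W (p + q)) := inf_le_inf_left _ (h.cx_le_cx (by omega))
  induction m using Int.forall_of_forall_le_of_pred a with
  | hle m hma =>
    rw [ha m hma, cx_bot, sup_bot_eq, Ipq, Rpq, inf_comm (cx V _)]
    exact le_sup_left
  | hpred m _ ih =>
    -- split `W_m` by the Hodge decomposition of `Gr^W_m`; its `F^p` part lies in `G`
    have hWm : cx V (W m) ≤ Lpq W F p q ⊔ cx V (W (m - 1)) ⊔ G := by
      rw [← h.gr_sup m p]
      refine sup_le (le_sup_of_le_right (inf_le_inf_left _ (h.cx_le_cx hm)))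
        (sup_le (le_sup_of_le_left (le_sup_of_le_left ?_)) (le_sup_of_le_left le_sup_right))
      exact (inf_comm _ _).le.trans (h.cx_inf_map_conjC_le_Lpq p q hm)
    calc F p ⊓ cx V (W (p + q)) ⊓ (Lpq W F p q ⊔ cx V (W m))
        ≤ F p ⊓ cx V (W (p + q)) ⊓ (Lpq W F p q ⊔ cx V (W (m - 1)) ⊔ G) :=
          inf_le_inf_left _ (sup_le (le_sup_of_le_left le_sup_left) hWm)
      _ = F p ⊓ cx V (W (p + q)) ⊓ (Lpq W F p q ⊔ cx V (W (m - 1))) ⊔ G :=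
          (inf_sup_assoc_of_le _ hG).symm
      _ ≤ Ipq W F p q ⊔ G := sup_le (ih (by omega)) le_sup_right

lemma IsRMHS.F_inf_cx_le (h : IsRMHS W F) (p n : ℤ) :
    F p ⊓ cx V (W n) ≤
      F (p + 1) ⊓ cx V (W n) ⊔ Ipq W F p (n - p) ⊔ F p ⊓ cx V (W (n - 1)) := by
  have hL : (F (n + 1 - (p + 1))).map (conjC V) ⊓ cx V (W n) ≤ Lpq W F p (n - p) := by
    rw [Lpq, add_sub_cancel, show n + 1 - (p + 1) = n - p by ring, inf_comm]
    exact le_sup_left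
  have hS := h.F_inf_cx_inf_Lpq_sup_le p (n - p) (m := n - 1) (by omega)
  rw [add_sub_cancel] at hS
  have hF : F (p + 1) ⊓ cx V (W n) ≤ F p ⊓ cx V (W n) := inf_le_inf_right _ (h.antiF (by omega))
  calc F p ⊓ cx V (W n)
      = (F (p + 1) ⊓ cx V (W n) ⊔ ((F (n + 1 - (p + 1))).map (conjC V) ⊓ cx V (W n) ⊔
          cx V (W (n - 1)))) ⊓ (F p ⊓ cx V (W n)) := by
        rw [h.gr_sup n (p + 1), inf_eq_right.mpr inf_le_right]
    _ = F (p + 1) ⊓ cx V (W n) ⊔ ((F (n + 1 - (p + 1))).map (conjC V) ⊓ cx V (W n) ⊔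
          cx V (W (n - 1))) ⊓ (F p ⊓ cx V (W n)) := sup_inf_assoc_of_le _ hF
    _ ≤ F (p + 1) ⊓ cx V (W n) ⊔ (Ipq W F p (n - p) ⊔ F p ⊓ cx V (W (n - 1))) :=
        sup_le_sup_left ((inf_comm _ _).le.trans
          ((inf_le_inf_left _ (sup_le_sup_right hL _)).trans hS)) _
    _ = _ := (sup_assoc _ _ _).symm

lemma IsRMHS.F_inf_cx_le_iSup_Ipq (h : IsRMHS W F) (p n : ℤ) :
    F p ⊓ cx V (W n) ≤ ⨆ (i : ℤ × ℤ) (_ : p ≤ i.1 ∧ i.1 + i.2 ≤ n), Ipq W F i.1 i.2 := by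
  obtain ⟨a, ha⟩ := h.w_bot
  obtain ⟨b, hb⟩ := h.f_bot
  induction n using Int.forall_of_forall_le_of_pred a generalizing p with
  | hle n hn => rw [ha n hn, cx_bot, inf_bot_eq]; exact bot_le
  | hpred n _ ihn =>
    induction p using Int.forall_of_forall_ge_of_succ b with
    | hge p hp => rw [hb p hp, bot_inf_eq]; exact bot_le
    | hsucc p _ ihp =>
      refine (h.F_inf_cx_le p n).trans (sup_le (sup_le ?_ ?_) ?_)
      · exact ihp.trans (biSup_mono fun i hi => ⟨by omega, hi.2⟩)
      · exact le_biSup (fun i : ℤ × ℤ => Ipq W F i.1 i.2) (i := (p, n - p)) ⟨le_rfl, by simp⟩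
      · exact (ihn p).trans (biSup_mono fun i hi => ⟨hi.1, by omega⟩)

lemma IsRMHS.cx_eq_iSup_Ipq (h : IsRMHS W F) (n : ℤ) :
    cx V (W n) = ⨆ (i : ℤ × ℤ) (_ : i.1 + i.2 ≤ n), Ipq W F i.1 i.2 := by
  obtain ⟨a, ha⟩ := h.f_top
  refine le_antisymm ?_ (iSup₂_le fun i hi => Ipq_le_cx.trans (h.cx_le_cx hi))
  simpa [ha a le_rfl] using (h.F_inf_cx_le_iSup_Ipq a n).trans (biSup_mono fun i hi => hi.2)

lemma IsRMHS.F_eq_iSup_Ipq (h : IsRMHS W F) (p : ℤ) :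
    F p = ⨆ (i : ℤ × ℤ) (_ : p ≤ i.1), Ipq W F i.1 i.2 := by
  obtain ⟨b, hb⟩ := h.w_top
  refine le_antisymm ?_ (iSup₂_le fun i hi => Ipq_le_F.trans (h.antiF hi))
  simpa [hb b le_rfl, cx_top] using
    (h.F_inf_cx_le_iSup_Ipq p b).trans (biSup_mono fun i hi => hi.1)

lemma IsRMHS.iSup_Ipq_eq_top (h : IsRMHS W F) : ⨆ i : ℤ × ℤ, Ipq W F i.1 i.2 = ⊤ := by
  obtain ⟨a, ha⟩ := h.f_top
  rw [eq_top_iff, ← ha a le_rfl, h.F_eq_iSup_Ipq a]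
  exact iSup₂_le fun i _ => le_iSup_of_le i le_rfl

lemma IsRMHS.map_gr_sup {Q : Type*} [AddCommGroup Q] [Module ℂ Q] (h : IsRMHS W F)
    (π : ℂ ⊗[ℝ] V →ₗ[ℂ] Q) (n p : ℤ) :
    (F p).map π ⊓ (cx V (W n)).map π ⊔ (((F (n + 1 - p)).map (conjC V)).map π ⊓
        (cx V (W n)).map π ⊔ (cx V (W (n - 1))).map π) =
      (cx V (W n)).map π := by
  refine le_antisymm (sup_le inf_le_right (sup_le inf_le_right
    (Submodule.map_mono (h.cx_le_cx (by omega))))) ?_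
  conv_lhs => rw [← h.gr_sup n p, Submodule.map_sup, Submodule.map_sup]
  exact sup_le_sup (Submodule.map_inf_le _) (sup_le_sup_right (Submodule.map_inf_le _) _)

end Deligne

section Morphism

variable {V V' : Type*} [AddCommGroup V] [Module ℝ V] [AddCommGroup V'] [Module ℝ V']
  {W : ℤ → Submodule ℝ V} {F : ℤ → Submodule ℂ (ℂ ⊗[ℝ] V)}
  {W' : ℤ → Submodule ℝ V'} {F' : ℤ → Submodule ℂ (ℂ ⊗[ℝ] V')} {f : V →ₗ[ℝ] V'}

lemma map_baseChange_cx_le (hfW : ∀ i, (W i).map f ≤ W' i) (n : ℤ) :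
    (cx V (W n)).map (f.baseChange ℂ) ≤ cx V' (W' n) := by
  rw [← cx_map]
  exact cx_mono (hfW n)

lemma map_baseChange_map_conjC_le (hfF : ∀ p, (F p).map (f.baseChange ℂ) ≤ F' p) (p : ℤ) :
    ((F p).map (conjC V)).map (f.baseChange ℂ) ≤ (F' p).map (conjC V') := by
  rw [map_baseChange_map_conjC]
  exact Submodule.map_mono (hfF p)

lemma map_baseChange_Ipq_le (hfW : ∀ i, (W i).map f ≤ W' i)
    (hfF : ∀ p, (F p).map (f.baseChange ℂ) ≤ F' p) (p q : ℤ) :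
    (Ipq W F p q).map (f.baseChange ℂ) ≤ Ipq W' F' p q := by
  have hinf {A B : Submodule ℂ (ℂ ⊗[ℝ] V)} {A' B' : Submodule ℂ (ℂ ⊗[ℝ] V')}
      (hA : A.map (f.baseChange ℂ) ≤ A') (hB : B.map (f.baseChange ℂ) ≤ B') :
      (A ⊓ B).map (f.baseChange ℂ) ≤ A' ⊓ B' :=
    (Submodule.map_inf_le _).trans (inf_le_inf hA hB)
  refine hinf (hinf (map_baseChange_cx_le hfW _) (hfF p)) ?_
  rw [Lpq, Submodule.map_sup, Submodule.map_iSup]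
  refine sup_le_sup (hinf (map_baseChange_cx_le hfW _) (map_baseChange_map_conjC_le hfF _))
    (iSup_mono fun i => ?_)
  rw [Submodule.map_iSup]
  exact iSup_mono fun _ => hinf (map_baseChange_cx_le hfW _) (map_baseChange_map_conjC_le hfF _)

lemma IsRMHS.range_baseChange_eq_iSup (h : IsRMHS W F) :
    LinearMap.range (f.baseChange ℂ) = ⨆ i : ℤ × ℤ, (Ipq W F i.1 i.2).map (f.baseChange ℂ) := by
  rw [LinearMap.range_eq_map, ← h.iSup_Ipq_eq_top, Submodule.map_iSup]

lemma IsRMHS.range_baseChange_inf_cx_le (h : IsRMHS W F) (h' : IsRMHS W' F')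
    (hfW : ∀ i, (W i).map f ≤ W' i) (hfF : ∀ p, (F p).map (f.baseChange ℂ) ≤ F' p) (n : ℤ) :
    LinearMap.range (f.baseChange ℂ) ⊓ cx V' (W' n) ≤ (cx V (W n)).map (f.baseChange ℂ) := by
  rw [h.range_baseChange_eq_iSup, h'.cx_eq_iSup_Ipq n]
  refine (h'.iSupIndep_Ipq.iSup_inf_iSup_le (fun i => map_baseChange_Ipq_le hfW hfF i.1 i.2)
    (fun i => iSup_le fun _ => le_rfl)).trans (iSup_le fun i => ?_)
  by_cases hi : i.1 + i.2 ≤ n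
  · exact inf_le_left.trans (Submodule.map_mono (Ipq_le_cx.trans (h.cx_le_cx hi)))
  · simp [hi]

lemma IsRMHS.F_sup_range_inf_cx_sup_range_le (h : IsRMHS W F) (h' : IsRMHS W' F')
    (hfW : ∀ i, (W i).map f ≤ W' i) (hfF : ∀ p, (F p).map (f.baseChange ℂ) ≤ F' p) (p n : ℤ) :
    (F' p ⊔ LinearMap.range (f.baseChange ℂ)) ⊓ (cx V' (W' n) ⊔ LinearMap.range (f.baseChange ℂ)) ≤
      F' p ⊓ cx V' (W' n) ⊔ LinearMap.range (f.baseChange ℂ) := by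
  set K : ℤ × ℤ → Submodule ℂ (ℂ ⊗[ℝ] V') := fun i => (Ipq W F i.1 i.2).map (f.baseChange ℂ)
  have hK : ∀ i, K i ≤ F' p ⊓ cx V' (W' n) ⊔ LinearMap.range (f.baseChange ℂ) :=
    fun i => le_sup_of_le_right LinearMap.map_le_range
  calc (F' p ⊔ LinearMap.range (f.baseChange ℂ)) ⊓
        (cx V' (W' n) ⊔ LinearMap.range (f.baseChange ℂ))
      = (⨆ i : ℤ × ℤ, (⨆ (_ : p ≤ i.1), Ipq W' F' i.1 i.2) ⊔ K i) ⊓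
          (⨆ i : ℤ × ℤ, (⨆ (_ : i.1 + i.2 ≤ n), Ipq W' F' i.1 i.2) ⊔ K i) := by
        rw [iSup_sup_eq, iSup_sup_eq, ← h'.F_eq_iSup_Ipq, ← h'.cx_eq_iSup_Ipq,
          ← h.range_baseChange_eq_iSup]
    _ ≤ ⨆ i : ℤ × ℤ, ((⨆ (_ : p ≤ i.1), Ipq W' F' i.1 i.2) ⊔ K i) ⊓
          ((⨆ (_ : i.1 + i.2 ≤ n), Ipq W' F' i.1 i.2) ⊔ K i) :=
        h'.iSupIndep_Ipq.iSup_inf_iSup_le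
          (fun i => sup_le (iSup_le fun _ => le_rfl) (map_baseChange_Ipq_le hfW hfF i.1 i.2))
          (fun i => sup_le (iSup_le fun _ => le_rfl) (map_baseChange_Ipq_le hfW hfF i.1 i.2))
    _ ≤ _ := iSup_le fun i => ?_
  by_cases hp : p ≤ i.1
  · by_cases hn : i.1 + i.2 ≤ n
    · simp only [hp, hn, iSup_pos, inf_idem]
      exact sup_le (le_sup_of_le_left
        (le_inf (Ipq_le_F.trans (h'.antiF hp)) (Ipq_le_cx.trans (h'.cx_le_cx hn)))) (hK i)
    · simpa [hn] using hK i
  · simpa [hp] using hK i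

/-- Obtained from the case of `F'` by conjugating: `W'_n ⊗ ℂ` and `f_ℂ(V_ℂ)` are real. -/
lemma IsRMHS.map_conjC_sup_range_inf_cx_sup_range_le (h : IsRMHS W F) (h' : IsRMHS W' F')
    (hfW : ∀ i, (W i).map f ≤ W' i) (hfF : ∀ p, (F p).map (f.baseChange ℂ) ≤ F' p) (p n : ℤ) :
    ((F' p).map (conjC V') ⊔ LinearMap.range (f.baseChange ℂ)) ⊓
        (cx V' (W' n) ⊔ LinearMap.range (f.baseChange ℂ)) ≤
      (F' p).map (conjC V') ⊓ cx V' (W' n) ⊔ LinearMap.range (f.baseChange ℂ) := by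
  have := Submodule.map_mono (f := conjC V') (h.F_sup_range_inf_cx_sup_range_le h' hfW hfF p n)
  simpa only [Submodule.map_inf _ conjC_involutive.injective, Submodule.map_sup, map_conjC_cx,
    map_conjC_range_baseChange] using this

lemma IsRMHS.gr_sup_range_inf_gr_sup_range_le (h : IsRMHS W F) (h' : IsRMHS W' F')
    (hfW : ∀ i, (W i).map f ≤ W' i) (hfF : ∀ p, (F p).map (f.baseChange ℂ) ≤ F' p) (n p : ℤ) :
    (F' p ⊓ cx V' (W' n) ⊔ cx V' (W' (n - 1)) ⊔ LinearMap.range (f.baseChange ℂ)) ⊓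
        ((F' (n + 1 - p)).map (conjC V') ⊓ cx V' (W' n) ⊔ cx V' (W' (n - 1)) ⊔
          LinearMap.range (f.baseChange ℂ)) ≤
      cx V' (W' (n - 1)) ⊔ LinearMap.range (f.baseChange ℂ) := by
  set K := LinearMap.range (f.baseChange ℂ)
  set A := F' p ⊓ cx V' (W' n)
  set B := (F' (n + 1 - p)).map (conjC V') ⊓ cx V' (W' n)
  set Wn := cx V' (W' n)
  set Wm := cx V' (W' (n - 1))
  have hWm : Wm ≤ Wn := h'.cx_le_cx (by omega)
  -- `K ∩ W'_n = f_ℂ(W_n)`, and `W_n` splits as in `Gr^W_n V`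
  have hKW : K ⊓ Wn ≤ B ⊔ Wm ⊔ A ⊓ K := by
    refine (h.range_baseChange_inf_cx_le h' hfW hfF n).trans ?_
    rw [← h.gr_sup n p, Submodule.map_sup, Submodule.map_sup]
    refine sup_le (le_sup_of_le_right (le_inf ?_ LinearMap.map_le_range))
      (sup_le (le_sup_of_le_left (le_sup_of_le_left ?_))
        (le_sup_of_le_left (le_sup_of_le_right (map_baseChange_cx_le hfW _))))
    · exact (Submodule.map_inf_le _).trans (inf_le_inf (hfF p) (map_baseChange_cx_le hfW n))
    · exact (Submodule.map_inf_le _).trans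
        (inf_le_inf (map_baseChange_map_conjC_le hfF _) (map_baseChange_cx_le hfW n))
  have hgr : A ⊓ (B ⊔ Wm) ≤ Wm :=
    (inf_le_inf_left A (sup_le_sup_right inf_le_left Wm)).trans (h'.inf_le_cx_sub_one n p)
  have hA : A ⊓ (B ⊔ Wm ⊔ K) ≤ Wm ⊔ K :=
    calc A ⊓ (B ⊔ Wm ⊔ K) ≤ A ⊓ ((B ⊔ Wm ⊔ K) ⊓ Wn) :=
          le_inf inf_le_left (le_inf inf_le_right (inf_le_left.trans inf_le_right))
      _ = A ⊓ (B ⊔ Wm ⊔ K ⊓ Wn) := by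
          rw [sup_inf_assoc_of_le K (sup_le inf_le_right hWm)]
      _ ≤ A ⊓ (B ⊔ Wm ⊔ A ⊓ K) := inf_le_inf_left _ (sup_le le_sup_left hKW)
      _ = A ⊓ (B ⊔ Wm) ⊔ A ⊓ K := (inf_sup_assoc_of_le _ inf_le_left).symm
      _ ≤ Wm ⊔ K := sup_le_sup hgr inf_le_right
  calc (A ⊔ Wm ⊔ K) ⊓ (B ⊔ Wm ⊔ K) = (Wm ⊔ K ⊔ A) ⊓ (B ⊔ Wm ⊔ K) := by
        rw [sup_comm (Wm ⊔ K), sup_assoc]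
    _ = Wm ⊔ K ⊔ A ⊓ (B ⊔ Wm ⊔ K) :=
        sup_inf_assoc_of_le _ (sup_le_sup_right le_sup_right K)
    _ ≤ Wm ⊔ K := sup_le le_rfl hA

lemma IsRMHS.map_gr_inf_le {Q : Type*} [AddCommGroup Q] [Module ℂ Q] (h : IsRMHS W F)
    (h' : IsRMHS W' F')
    (hfW : ∀ i, (W i).map f ≤ W' i) (hfF : ∀ p, (F p).map (f.baseChange ℂ) ≤ F' p)
    {π : ℂ ⊗[ℝ] V' →ₗ[ℂ] Q} (hπ : Function.Surjective π)
    (hker : LinearMap.ker π = LinearMap.range (f.baseChange ℂ)) (n p : ℤ) :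
    ((F' p).map π ⊓ (cx V' (W' n)).map π ⊔ (cx V' (W' (n - 1))).map π) ⊓
        (((F' (n + 1 - p)).map (conjC V')).map π ⊓ (cx V' (W' n)).map π ⊔
          (cx V' (W' (n - 1))).map π) ≤
      (cx V' (W' (n - 1))).map π := by
  have hF : (F' p).map π ⊓ (cx V' (W' n)).map π ≤ (F' p ⊓ cx V' (W' n)).map π :=
    Submodule.map_inf_map_le_map_of_surjective hπ
      (by rw [hker]; exact h.F_sup_range_inf_cx_sup_range_le h' hfW hfF p n)
  have hσF : ((F' (n + 1 - p)).map (conjC V')).map π ⊓ (cx V' (W' n)).map π ≤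
      ((F' (n + 1 - p)).map (conjC V') ⊓ cx V' (W' n)).map π :=
    Submodule.map_inf_map_le_map_of_surjective hπ
      (by rw [hker]; exact h.map_conjC_sup_range_inf_cx_sup_range_le h' hfW hfF _ n)
  refine (inf_le_inf (sup_le_sup_right hF _) (sup_le_sup_right hσF _)).trans ?_
  rw [← Submodule.map_sup, ← Submodule.map_sup]
  exact Submodule.map_inf_map_le_map_of_surjective hπ
    (by rw [hker]; exact h.gr_sup_range_inf_gr_sup_range_le h' hfW hfF n p)

end Morphism

end MHS

theorem cokernel_is_RMHS_general
    (V V' : Type*) [AddCommGroup V] [Module ℝ V]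
    [AddCommGroup V'] [Module ℝ V']
    (W : ℤ → Submodule ℝ V) (F : ℤ → Submodule ℂ (ℂ ⊗[ℝ] V))
    (W' : ℤ → Submodule ℝ V') (F' : ℤ → Submodule ℂ (ℂ ⊗[ℝ] V'))
    (h : MHS.IsRMHS W F) (h' : MHS.IsRMHS W' F')
    (f : V →ₗ[ℝ] V')
    (hfW : ∀ i : ℤ, (W i).map f ≤ W' i)
    (hfF : ∀ p : ℤ, (F p).map (f.baseChange ℂ) ≤ F' p) :
    MHS.IsRMHS (V := V' ⧸ LinearMap.range f)
      (fun i => (W' i).map (LinearMap.range f).mkQ)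
      (fun p => (F' p).map (((LinearMap.range f).mkQ).baseChange ℂ)) := by
  have hπ : Function.Surjective (((LinearMap.range f).mkQ).baseChange ℂ) :=
    LinearMap.lTensor_surjective ℂ (Submodule.mkQ_surjective _)
  obtain ⟨aW, haW⟩ := h'.w_bot
  obtain ⟨bW, hbW⟩ := h'.w_top
  obtain ⟨aF, haF⟩ := h'.f_top
  obtain ⟨bF, hbF⟩ := h'.f_bot
  refine ⟨fun i j hij => Submodule.map_mono (h'.monoW hij),
    fun p q hpq => Submodule.map_mono (h'.antiF hpq),
    ⟨aW, fun i hi => by rw [haW i hi, Submodule.map_bot]⟩,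
    ⟨bW, fun i hi => by rw [hbW i hi, Submodule.map_top, Submodule.range_mkQ]⟩,
    ⟨aF, fun p hp => by rw [haF p hp, Submodule.map_top, LinearMap.range_eq_top.mpr hπ]⟩,
    ⟨bF, fun p hp => by rw [hbF p hp, Submodule.map_bot]⟩, fun n p => ?_, fun n p => ?_⟩ <;>
  simp only [MHS.cx_map, ← MHS.map_baseChange_map_conjC]
  · exact le_antisymm (h.map_gr_inf_le h' hfW hfF hπ (LinearMap.ker_baseChange_mkQ_range f) n p)
      (le_inf le_sup_right le_sup_right)
  · exact h'.map_gr_sup _ n p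

/-- The cokernel `Q = V'/f(V)` of a morphism of `ℝ`-mixed
Hodge structures, with the filtrations `W_i(Q) = π(W'_i)` and
`F^p(Q_ℂ) = π_ℂ(F'^p)` (under the identification of `Q_ℂ = ℂ ⊗ Q` with
`V'_ℂ / f_ℂ(V_ℂ)`), is an `ℝ`-mixed Hodge structure on `Q`. -/
theorem cokernel_is_RMHS
    (V V' : Type*) [AddCommGroup V] [Module ℝ V] [FiniteDimensional ℝ V]
    [AddCommGroup V'] [Module ℝ V'] [FiniteDimensional ℝ V']
    (W : ℤ → Submodule ℝ V) (F : ℤ → Submodule ℂ (ℂ ⊗[ℝ] V))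
    (W' : ℤ → Submodule ℝ V') (F' : ℤ → Submodule ℂ (ℂ ⊗[ℝ] V'))
    (h : MHS.IsRMHS W F) (h' : MHS.IsRMHS W' F')
    (f : V →ₗ[ℝ] V')
    (hfW : ∀ i : ℤ, (W i).map f ≤ W' i)
    (hfF : ∀ p : ℤ, (F p).map (f.baseChange ℂ) ≤ F' p) :
    MHS.IsRMHS (V := V' ⧸ LinearMap.range f)
      (fun i => (W' i).map (LinearMap.range f).mkQ)
      (fun p => (F' p).map (((LinearMap.range f).mkQ).baseChange ℂ)) :=
  cokernel_is_RMHS_general V V' W F W' F' h h' f hfW hfF
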